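/- arXiv:1207.2266 — 6 statements merged into one kernel-verified Lean document; each statement's English description precedes it below -/
import Mathlib

section
/- Let V be an n-dimensional vector space over a field k, and let c = (V_1 ⊂ ⋯ ⊂ V_{n-1}) and c' = (V'_1 ⊂ ⋯ ⊂ V'_{n-1}) be two complete flags in V (with V_0 = V'_0 = 0 and V_n = V'_n = V). For each i with 1 ≤ i ≤ n, the set { j : V'_i ⊆ V'_{i−1} + V_j } is nonempty, so π(i) = min{ j : V'_i ⊆ V'_{i−1} + V_j } is well defined; moreover the resulting function π is a permutation of {1, …, n}. -/
/-- A complete flag in an `n`-dimensional vector space: a chain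
`0 = F 0 ⊂ F 1 ⊂ ⋯ ⊂ F n = V` with `dim (F i) = i`. -/
def IsCompleteFlag (k : Type*) {V : Type*} [Field k] [AddCommGroup V] [Module k V]
    (n : ℕ) (F : ℕ → Submodule k V) : Prop :=
  F 0 = ⊥ ∧ F n = ⊤ ∧ (∀ i ≤ n, Module.finrank k ↥(F i) = i) ∧ ∀ i < n, F i ≤ F (i + 1)

/-- Monotonicity of a flag-like chain. -/
lemma flag_mono' {k V : Type*} [Field k] [AddCommGroup V] [Module k V] {n : ℕ}
    {F : ℕ → Submodule k V} (h : ∀ i < n, F i ≤ F (i + 1)) :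
    ∀ a b, a ≤ b → b ≤ n → F a ≤ F b := by
  intro a b hab hbn
  induction b with
  | zero => simp_all
  | succ m ih =>
    rcases Nat.eq_or_lt_of_le hab with rfl | hlt
    · exact le_rfl
    · exact (ih (Nat.lt_succ_iff.mp hlt) (le_trans (Nat.le_succ m) hbn)).trans
        (h m (Nat.lt_of_lt_of_le (Nat.lt_succ_self m) hbn))

/-- If `p ≤ q`, `finrank p = m`, `finrank q = m+1`, and `v ∈ q \ p`,
then `q = p ⊔ span {v}`. -/
lemma flag_fill {k V : Type*} [Field k] [AddCommGroup V] [Module k V]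
    {p q : Submodule k V} {m : ℕ} (hpq : p ≤ q)
    (hp : Module.finrank k ↥p = m) (hq : Module.finrank k ↥q = m + 1)
    {v : V} (hv : v ∈ q) (hv' : v ∉ p) :
    q = p ⊔ Submodule.span k {v} := by
  haveI : FiniteDimensional k ↥q := Module.finite_of_finrank_eq_succ hq
  have h1 : p ⊔ Submodule.span k {v} ≤ q :=
    sup_le hpq ((Submodule.span_singleton_le_iff_mem _ _).mpr hv)
  haveI : FiniteDimensional k ↥(p ⊔ Submodule.span k {v}) :=
    Submodule.finiteDimensional_of_le h1
  have h2 : p < p ⊔ Submodule.span k {v} := by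
    refine lt_of_le_of_ne le_sup_left fun h => hv' ?_
    have : v ∈ p ⊔ Submodule.span k {v} :=
      Submodule.mem_sup_right (Submodule.mem_span_singleton_self v)
    rwa [← h] at this
  have h3 : m < Module.finrank k ↥(p ⊔ Submodule.span k {v}) :=
    hp ▸ Submodule.finrank_lt_finrank_of_lt h2
  have h4 : Module.finrank k ↥(p ⊔ Submodule.span k {v}) ≤ m + 1 :=
    hq ▸ Submodule.finrank_mono h1
  exact (Submodule.eq_of_le_of_finrank_le h1 (by omega)).symm

/-- Let `c = (V_i)` and `c' = (V'_i)` be two complete flags in an `n`-dimensional space `V`.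
For each `1 ≤ i ≤ n` the set `{j : 1 ≤ j and V'_i ⊆ V'_{i-1} + V_j}` is nonempty, so
`π(i) = min { j : V'_i ⊆ V'_{i-1} + V_j }` is well defined; moreover the resulting
function `π` is a permutation of `{1, …, n}`. -/
theorem stmt_2 (k V : Type*) [Field k] [AddCommGroup V] [Module k V]
    (n : ℕ) (hV : Module.finrank k V = n)
    (F F' : ℕ → Submodule k V)
    (hF : IsCompleteFlag k n F) (hF' : IsCompleteFlag k n F') :
    (∀ i ∈ Set.Icc 1 n, {j : ℕ | 1 ≤ j ∧ F' i ≤ F' (i - 1) ⊔ F j}.Nonempty) ∧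
    Set.BijOn (fun i => sInf {j : ℕ | 1 ≤ j ∧ F' i ≤ F' (i - 1) ⊔ F j})
      (Set.Icc 1 n) (Set.Icc 1 n) := by
  obtain ⟨hF0, hFn, hFr, hFc⟩ := hF
  obtain ⟨hF'0, hF'n, hF'r, hF'c⟩ := hF'
  have hmono : ∀ a b, a ≤ b → b ≤ n → F a ≤ F b := flag_mono' hFc
  have hmono' : ∀ a b, a ≤ b → b ≤ n → F' a ≤ F' b := flag_mono' hF'c
  set S : ℕ → Set ℕ := fun i => {j : ℕ | 1 ≤ j ∧ F' i ≤ F' (i - 1) ⊔ F j} with hS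
  have hne : ∀ i ∈ Set.Icc 1 n, (S i).Nonempty := by
    intro i hi
    refine ⟨n, le_trans hi.1 hi.2, ?_⟩
    rw [hFn, sup_top_eq]; exact le_top
  -- the minimum can never be improved by one step: contradiction helper
  have hkey : ∀ i ∈ Set.Icc 1 n, ¬ F' i ≤ F' (i - 1) ⊔ F (sInf (S i) - 1) := by
    intro i hi h
    have hil : 1 ≤ i := hi.1
    have hir : i ≤ n := hi.2
    have hmem : sInf (S i) ∈ S i := Nat.sInf_mem (hne i hi)
    rcases Nat.lt_or_ge (sInf (S i)) 2 with h2 | h2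
    · -- sInf = 1, so F (sInf - 1) = F 0 = ⊥
      have h1 : sInf (S i) = 1 := le_antisymm (by omega) hmem.1
      rw [h1] at h
      simp only [Nat.sub_self, hF0, sup_bot_eq] at h
      have hle : F' (i - 1) ≤ F' i := hmono' (i - 1) i (Nat.sub_le _ _) hi.2
      have heq : F' i = F' (i - 1) := le_antisymm h hle
      have e1 := hF'r i hi.2
      have e2 := hF'r (i - 1) (le_trans (Nat.sub_le _ _) hi.2)
      rw [heq, e2] at e1
      omega
    · have : sInf (S i) - 1 ∈ S i := ⟨by omega, h⟩
      have := Nat.sInf_le this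
      omega
  have hmaps : Set.MapsTo (fun i => sInf (S i)) (Set.Icc 1 n) (Set.Icc 1 n) := by
    intro i hi
    have hmem : sInf (S i) ∈ S i := Nat.sInf_mem (hne i hi)
    refine ⟨hmem.1, Nat.sInf_le ⟨le_trans hi.1 hi.2, ?_⟩⟩
    rw [hFn, sup_top_eq]; exact le_top
  have hinj : ∀ i1 ∈ Set.Icc 1 n, ∀ i2 ∈ Set.Icc 1 n, i1 < i2 →
      sInf (S i1) ≠ sInf (S i2) := by
    intro i1 hi1 i2 hi2 hlt heq
    have hi1l : 1 ≤ i1 := hi1.1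
    have hi1r : i1 ≤ n := hi1.2
    have hi2l : 1 ≤ i2 := hi2.1
    have hi2r : i2 ≤ n := hi2.2
    have hm1 : sInf (S i1) ∈ S i1 := Nat.sInf_mem (hne i1 hi1)
    have hm2 : sInf (S i1) ∈ S i2 := by rw [heq]; exact Nat.sInf_mem (hne i2 hi2)
    set j := sInf (S i1) with hj
    have hjn : j ≤ n := (hmaps hi1).2
    -- pick v ∈ F' i1 \ F' (i1 - 1)
    have hlt' : F' (i1 - 1) < F' i1 := by
      refine lt_of_le_of_ne (hmono' (i1 - 1) i1 (Nat.sub_le _ _) hi1.2) fun h => ?_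
      have e1 := hF'r i1 hi1.2
      have e2 := hF'r (i1 - 1) (le_trans (Nat.sub_le _ _) hi1.2)
      rw [← h, e2] at e1
      omega
    obtain ⟨v, hv, hv'⟩ := SetLike.exists_of_lt hlt'
    obtain ⟨u, hu, w, hw, huw⟩ := Submodule.mem_sup.mp (hm1.2 hv)
    have hfill1 : F' i1 = F' (i1 - 1) ⊔ Submodule.span k {v} :=
      flag_fill (hmono' (i1 - 1) i1 (Nat.sub_le _ _) hi1.2)
        (hF'r (i1 - 1) (le_trans (Nat.sub_le _ _) hi1.2))
        (by rw [hF'r i1 hi1.2]; omega) hv hv'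
    have hwnot : w ∉ F (j - 1) := by
      intro hwin
      have hvin : v ∈ F' (i1 - 1) ⊔ F (j - 1) := Submodule.mem_sup.mpr ⟨u, hu, w, hwin, huw⟩
      have : F' i1 ≤ F' (i1 - 1) ⊔ F (j - 1) := by
        rw [hfill1]
        exact sup_le le_sup_left ((Submodule.span_singleton_le_iff_mem _ _).mpr hvin)
      exact hkey i1 hi1 this
    have hfill2 : F j = F (j - 1) ⊔ Submodule.span k {w} :=
      flag_fill (hmono (j - 1) j (Nat.sub_le _ _) hjn)
        (hFr (j - 1) (le_trans (Nat.sub_le _ _) hjn))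
        (by rw [hFr j hjn]; have := hm1.1; omega) hw hwnot
    have hwin' : w ∈ F' i1 := by
      have hwvu : w = v - u := by rw [← huw]; abel
      rw [hwvu]
      exact Submodule.sub_mem _ hv (hmono' (i1 - 1) i1 (Nat.sub_le _ _) hi1.2 hu)
    have h5 : F j ≤ F (j - 1) ⊔ F' (i2 - 1) := by
      rw [hfill2]
      refine sup_le le_sup_left (le_trans ((Submodule.span_singleton_le_iff_mem _ _).mpr hwin')
        (le_trans (hmono' i1 (i2 - 1) (by omega) (by omega)) le_sup_right))
    have hfinal : F' i2 ≤ F' (i2 - 1) ⊔ F (j - 1) := by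
      calc F' i2 ≤ F' (i2 - 1) ⊔ F j := hm2.2
        _ ≤ F' (i2 - 1) ⊔ (F (j - 1) ⊔ F' (i2 - 1)) := sup_le_sup_left h5 _
        _ = F' (i2 - 1) ⊔ F (j - 1) := by
            rw [sup_comm (F (j - 1)), ← sup_assoc, sup_idem]
    have := hkey i2 hi2
    rw [← heq] at this
    exact this hfinal
  refine ⟨hne, ?_⟩
  refine ((Set.finite_Icc 1 n).injOn_iff_bijOn_of_mapsTo hmaps).mp ?_
  intro a ha b hb hab
  by_contra hne'
  rcases lt_or_gt_of_ne hne' with h | h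
  · exact hinj a ha b hb h hab
  · exact hinj b hb a ha h hab.symm
end

section
/- Let V be an n-dimensional vector space over a field k. If (c, c') and (d, d') are two ordered pairs of complete flags in V with the same relative position, δ(c, c') = δ(d, d'), then there exists g ∈ GL(V) with g·c = d and g·c' = d', where g acts on a complete flag by applying g to each subspace in the chain. (Thus GL(V) acts transitively on ordered pairs of complete flags a fixed relative position apart.) -/
/-- The relative position of two complete flags: `δ(c, c') i = min {j : V'_i ⊆ V'_{i-1} + V_j}`. -/
noncomputable def relPos {k V : Type*} [Field k] [AddCommGroup V] [Module k V]
    (F F' : ℕ → Submodule k V) (i : ℕ) : ℕ :=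
  sInf {j : ℕ | 1 ≤ j ∧ F' i ≤ F' (i - 1) ⊔ F j}

section Aux

open Submodule Module

variable {k V : Type*} [Field k] [AddCommGroup V] [Module k V] {n : ℕ}

lemma IsCompleteFlag.mono' {F : ℕ → Submodule k V} (hF : IsCompleteFlag k n F)
    {i j : ℕ} (hij : i ≤ j) (hj : j ≤ n) : F i ≤ F j := by
  induction j with
  | zero => obtain rfl := Nat.le_zero.mp hij; exact le_rfl
  | succ j ih =>
    rcases Nat.eq_or_lt_of_le hij with h | h
    · exact le_of_eq (by rw [h])
    · exact le_trans (ih (by omega) (by omega)) (hF.2.2.2 j (by omega))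

lemma relPos_spec [FiniteDimensional k V] {c c' : ℕ → Submodule k V}
    (hc : IsCompleteFlag k n c) (hc' : IsCompleteFlag k n c')
    {i : ℕ} (hi1 : 1 ≤ i) (hin : i ≤ n) :
    1 ≤ relPos c c' i ∧ relPos c c' i ≤ n ∧
      c' i ≤ c' (i - 1) ⊔ c (relPos c c' i) ∧
      ¬ c' i ≤ c' (i - 1) ⊔ c (relPos c c' i - 1) := by
  have hne : n ∈ {j : ℕ | 1 ≤ j ∧ c' i ≤ c' (i - 1) ⊔ c j} := by
    refine ⟨hi1.trans hin, ?_⟩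
    rw [hc.2.1, sup_top_eq]
    exact le_top
  have hmem := Nat.sInf_mem (⟨n, hne⟩ : {j : ℕ | 1 ≤ j ∧ c' i ≤ c' (i - 1) ⊔ c j}.Nonempty)
  set p := relPos c c' i with hp
  have h1 : 1 ≤ p := hmem.1
  have hle : p ≤ n := Nat.sInf_le hne
  refine ⟨h1, hle, hmem.2, ?_⟩
  intro hcon
  rcases Nat.lt_or_ge 1 p with h2 | h2
  · have hm : p - 1 ∈ {j : ℕ | 1 ≤ j ∧ c' i ≤ c' (i - 1) ⊔ c j} := ⟨by omega, hcon⟩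
    have h3 : p ≤ p - 1 := Nat.sInf_le hm
    omega
  · have hp1 : p = 1 := le_antisymm h2 h1
    rw [hp1] at hcon
    simp only [Nat.sub_self, hc.1, sup_bot_eq] at hcon
    have hmono := Submodule.finrank_mono hcon
    rw [hc'.2.2.1 i hin, hc'.2.2.1 (i - 1) (by omega)] at hmono
    omega

lemma exists_relPos_vec [FiniteDimensional k V] {c c' : ℕ → Submodule k V}
    (hc : IsCompleteFlag k n c) (hc' : IsCompleteFlag k n c')
    {i : ℕ} (hi1 : 1 ≤ i) (hin : i ≤ n) :
    ∃ v : V, v ∈ c' i ⊓ c (relPos c c' i) ∧ v ∉ c' (i - 1) ⊔ c (relPos c c' i - 1) := by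
  obtain ⟨h1, hn, hle, hnle⟩ := relPos_spec hc hc' hi1 hin
  obtain ⟨ww, hw, hw2⟩ := SetLike.not_le_iff_exists.mp hnle
  obtain ⟨u, hu, x, hx, heq⟩ := Submodule.mem_sup.mp (hle hw)
  have hxw : x = ww - u := by rw [← heq]; abel
  refine ⟨x, Submodule.mem_inf.mpr ⟨?_, hx⟩, fun hxs => hw2 ?_⟩
  · have hu' : u ∈ c' i := hc'.mono' (Nat.sub_le i 1) hin hu
    rw [hxw]; exact sub_mem hw hu'
  · rw [← heq]
    exact add_mem (Submodule.mem_sup_left hu) hxs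

lemma relPos_ne [FiniteDimensional k V] {c c' : ℕ → Submodule k V}
    (hc : IsCompleteFlag k n c) (hc' : IsCompleteFlag k n c')
    {i i' : ℕ} (hi1 : 1 ≤ i) (hii' : i < i') (hi'n : i' ≤ n) :
    relPos c c' i ≠ relPos c c' i' := by
  intro heq
  set p := relPos c c' i with hp
  obtain ⟨h1, hn, -, -⟩ := relPos_spec hc hc' hi1 (by omega)
  obtain ⟨v, hv, hvn⟩ := exists_relPos_vec hc hc' hi1 (by omega : i ≤ n)
  obtain ⟨v', hv', hv'n⟩ := exists_relPos_vec hc hc' (by omega : 1 ≤ i') hi'n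
  rw [← heq] at hv' hv'n
  obtain hv1 := (Submodule.mem_inf.mp hv).1
  obtain hv2 := (Submodule.mem_inf.mp hv).2
  have hvnc : v ∉ c (p - 1) := fun h => hvn (Submodule.mem_sup_right h)
  -- c p = c (p-1) ⊔ span {v}
  have hsub : c (p - 1) ⊔ Submodule.span k {v} ≤ c p :=
    sup_le (hc.mono' (by omega) hn) ((Submodule.span_singleton_le_iff_mem v _).mpr hv2)
  have hlt : c (p - 1) < c (p - 1) ⊔ Submodule.span k {v} :=
    SetLike.lt_iff_le_and_exists.mpr
      ⟨le_sup_left, v, Submodule.mem_sup_right (Submodule.mem_span_singleton_self v), hvnc⟩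
  have hfr := Submodule.finrank_lt_finrank_of_lt hlt
  rw [hc.2.2.1 (p - 1) (by omega)] at hfr
  have hcp : c (p - 1) ⊔ Submodule.span k {v} = c p := by
    refine Submodule.eq_of_le_of_finrank_le hsub ?_
    rw [hc.2.2.1 p hn]
    omega
  -- v' ∈ c p ≤ c (p-1) ⊔ c' (i'-1)
  have hspan : Submodule.span k {v} ≤ c' (i' - 1) := by
    rw [Submodule.span_singleton_le_iff_mem]
    exact hc'.mono' (by omega) (by omega) hv1
  have hv'mem : v' ∈ c (p - 1) ⊔ c' (i' - 1) := by
    have : v' ∈ c (p - 1) ⊔ Submodule.span k {v} := hcp ▸ (Submodule.mem_inf.mp hv').2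
    exact sup_le_sup_left hspan _ this
  rw [sup_comm] at hv'mem
  exact hv'n (Submodule.mem_sup.mp hv'mem |>.elim
    fun a ⟨ha, b, hb, hab⟩ => hab ▸ add_mem (Submodule.mem_sup_left ha) (Submodule.mem_sup_right hb))

lemma span_image_lt [FiniteDimensional k V] {c' : ℕ → Submodule k V}
    (hc' : IsCompleteFlag k n c') (v : Fin n → V)
    (hv1 : ∀ i : Fin n, v i ∈ c' ((i : ℕ) + 1)) (hv2 : ∀ i : Fin n, v i ∉ c' (i : ℕ)) :
    ∀ m ≤ n, Submodule.span k (v '' {i | (i : ℕ) < m}) = c' m := by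
  intro m
  induction m with
  | zero =>
    intro _
    have he : (v '' {i : Fin n | (i : ℕ) < 0}) = ∅ := by simp
    rw [he, Submodule.span_empty, hc'.1]
  | succ m ih =>
    intro hm
    have hm' : m < n := hm
    have him : {i : Fin n | (i : ℕ) < m + 1} = insert ⟨m, hm'⟩ {i : Fin n | (i : ℕ) < m} := by
      ext i
      simp only [Set.mem_setOf_eq, Set.mem_insert_iff, Fin.ext_iff]
      omega
    rw [him, Set.image_insert_eq, Submodule.span_insert, ih (le_of_lt hm')]
    set x := v ⟨m, hm'⟩ with hx
    have hx1 : x ∈ c' (m + 1) := hv1 ⟨m, hm'⟩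
    have hx2 : x ∉ c' m := hv2 ⟨m, hm'⟩
    have hsub : (Submodule.span k {x}) ⊔ c' m ≤ c' (m + 1) :=
      sup_le ((Submodule.span_singleton_le_iff_mem x _).mpr hx1) (hc'.2.2.2 m hm')
    have hlt : c' m < (Submodule.span k {x}) ⊔ c' m :=
      SetLike.lt_iff_le_and_exists.mpr
        ⟨le_sup_right, x, Submodule.mem_sup_left (Submodule.mem_span_singleton_self x), hx2⟩
    have hfr := Submodule.finrank_lt_finrank_of_lt hlt
    rw [hc'.2.2.1 m (by omega)] at hfr
    refine Submodule.eq_of_le_of_finrank_le hsub ?_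
    rw [hc'.2.2.1 (m + 1) hm]
    omega

lemma card_subtype_le {n : ℕ} (P : Fin n → ℕ) (hP1 : ∀ i, 1 ≤ P i) (hPn : ∀ i, P i ≤ n)
    (hinj : Function.Injective P) {j : ℕ} (hj : j ≤ n) :
    Fintype.card {i : Fin n // P i ≤ j} = j := by
  classical
  let e : Fin n → Fin n := fun i => ⟨P i - 1, by have := hP1 i; have := hPn i; omega⟩
  have heinj : Function.Injective e := by
    intro a b hab
    apply hinj
    have h : P a - 1 = P b - 1 := congrArg Fin.val hab
    have := hP1 a; have := hP1 b
    omega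
  have hbij := Finite.injective_iff_bijective.mp heinj
  have h1 : Fintype.card {i : Fin n // P i ≤ j} = Fintype.card {t : Fin n // (t : ℕ) < j} := by
    apply Fintype.card_congr
    refine (Equiv.ofBijective e hbij).subtypeEquiv fun a => ?_
    show P a ≤ j ↔ P a - 1 < j
    have := hP1 a
    omega
  rw [h1]
  have h2 : Fintype.card {t : Fin n // (t : ℕ) < j} = Fintype.card (Fin j) :=
    Fintype.card_congr
      ⟨fun t => ⟨t.1.1, t.2⟩, fun i => ⟨⟨i.1, lt_of_lt_of_le i.2 hj⟩, i.2⟩,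
        fun t => rfl, fun i => rfl⟩
  rw [h2, Fintype.card_fin]

lemma span_image_relPos_eq [FiniteDimensional k V] {c : ℕ → Submodule k V}
    (hc : IsCompleteFlag k n c) (v : Fin n → V) (hli : LinearIndependent k v)
    (P : Fin n → ℕ) (hPn : ∀ i, P i ≤ n) (hvP : ∀ i, v i ∈ c (P i))
    {j : ℕ} (hj : j ≤ n)
    (hcard : Fintype.card {i : Fin n // P i ≤ j} = j) :
    Submodule.span k (v '' {i | P i ≤ j}) = c j := by
  classical
  have hle : Submodule.span k (v '' {i | P i ≤ j}) ≤ c j := by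
    rw [Submodule.span_le]
    rintro x ⟨i, hi, rfl⟩
    exact hc.mono' hi hj (hvP i)
  have hrange : Set.range (fun t : {i : Fin n // P i ≤ j} => v t.1) = v '' {i | P i ≤ j} := by
    rw [show (fun t : {i : Fin n // P i ≤ j} => v t.1) = v ∘ Subtype.val from rfl,
      Set.range_comp, Subtype.range_coe_subtype]
  have hli' : LinearIndependent k (fun t : {i : Fin n // P i ≤ j} => v t.1) :=
    hli.comp Subtype.val Subtype.val_injective
  have hfr : Module.finrank k ↥(Submodule.span k (v '' {i | P i ≤ j})) = j := by
    rw [← hrange, finrank_span_eq_card hli', hcard]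
  refine Submodule.eq_of_le_of_finrank_le hle ?_
  rw [hfr, hc.2.2.1 j hj]

end Aux

/-- If `(c, c')` and `(d, d')` are two ordered pairs of complete flags in an `n`-dimensional
vector space `V` with the same relative position `δ(c, c') = δ(d, d')`, then there is a
`g ∈ GL(V)` with `g · c = d` and `g · c' = d'`: GL(V) acts transitively on ordered pairs
of complete flags a fixed relative position apart. -/
theorem stmt_3 (k V : Type*) [Field k] [AddCommGroup V] [Module k V]
    (n : ℕ) (hV : Module.finrank k V = n)
    (c c' d d' : ℕ → Submodule k V)
    (hc : IsCompleteFlag k n c) (hc' : IsCompleteFlag k n c')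
    (hd : IsCompleteFlag k n d) (hd' : IsCompleteFlag k n d')
    (hδ : ∀ i ∈ Set.Icc 1 n, relPos c c' i = relPos d d' i) :
    ∃ g : V ≃ₗ[k] V, (∀ i ≤ n, Submodule.map (g : V →ₗ[k] V) (c i) = d i) ∧
      (∀ i ≤ n, Submodule.map (g : V →ₗ[k] V) (c' i) = d' i) := by
  classical
  haveI : FiniteDimensional k V := by
    rcases Nat.eq_zero_or_pos n with rfl | h
    · have hbt : (⊥ : Submodule k V) = ⊤ := hc.1.symm.trans hc.2.1
      have : Subsingleton V := by
        constructor
        intro a b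
        have ha : a ∈ (⊥ : Submodule k V) := hbt.symm ▸ Submodule.mem_top
        have hb : b ∈ (⊥ : Submodule k V) := hbt.symm ▸ Submodule.mem_top
        rw [Submodule.mem_bot] at ha hb
        rw [ha, hb]
      infer_instance
    · exact FiniteDimensional.of_finrank_pos (by omega)
  obtain ⟨P, hP⟩ : ∃ P : Fin n → ℕ, ∀ i, P i = relPos c c' ((i : ℕ) + 1) :=
    ⟨_, fun _ => rfl⟩
  have hmemIcc : ∀ i : Fin n, ((i : ℕ) + 1) ∈ Set.Icc 1 n := fun i =>
    ⟨by omega, by have := i.isLt; omega⟩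
  have hexv : ∀ i : Fin n, ∃ x, (x ∈ c' ((i : ℕ) + 1) ⊓ c (P i)) ∧
      x ∉ c' (i : ℕ) ⊔ c (P i - 1) := by
    intro i
    rw [hP i]
    have h := exists_relPos_vec hc hc' (i := (i : ℕ) + 1) (by omega) (by have := i.isLt; omega)
    simpa using h
  have hexw : ∀ i : Fin n, ∃ x, (x ∈ d' ((i : ℕ) + 1) ⊓ d (P i)) ∧
      x ∉ d' (i : ℕ) ⊔ d (P i - 1) := by
    intro i
    rw [hP i, hδ ((i : ℕ) + 1) (hmemIcc i)]
    have h := exists_relPos_vec hd hd' (i := (i : ℕ) + 1) (by omega) (by have := i.isLt; omega)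
    simpa using h
  choose v hvm hvn using hexv
  choose w hwm hwn using hexw
  have hv1 : ∀ i : Fin n, v i ∈ c' ((i : ℕ) + 1) := fun i => (Submodule.mem_inf.mp (hvm i)).1
  have hv2 : ∀ i : Fin n, v i ∉ c' (i : ℕ) := fun i h => hvn i (Submodule.mem_sup_left h)
  have hvc : ∀ i : Fin n, v i ∈ c (P i) := fun i => (Submodule.mem_inf.mp (hvm i)).2
  have hw1 : ∀ i : Fin n, w i ∈ d' ((i : ℕ) + 1) := fun i => (Submodule.mem_inf.mp (hwm i)).1
  have hw2 : ∀ i : Fin n, w i ∉ d' (i : ℕ) := fun i h => hwn i (Submodule.mem_sup_left h)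
  have hwc : ∀ i : Fin n, w i ∈ d (P i) := fun i => (Submodule.mem_inf.mp (hwm i)).2
  have hP1 : ∀ i, 1 ≤ P i := fun i => by
    rw [hP i]
    exact (relPos_spec hc hc' (by omega) (by have := i.isLt; omega)).1
  have hPn : ∀ i, P i ≤ n := fun i => by
    rw [hP i]
    exact (relPos_spec hc hc' (by omega) (by have := i.isLt; omega)).2.1
  have hPinj : Function.Injective P := by
    intro a b hab
    by_contra hne
    have hne' : (a : ℕ) ≠ (b : ℕ) := fun h => hne (Fin.ext h)
    rw [hP a, hP b] at hab
    rcases Nat.lt_or_ge (a : ℕ) (b : ℕ) with h | h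
    · exact relPos_ne hc hc' (by omega) (by omega) (by have := b.isLt; omega) hab
    · exact relPos_ne hc hc' (by omega) (by omega) (by have := a.isLt; omega) hab.symm
  have hSc' := span_image_lt hc' v hv1 hv2
  have hSd' := span_image_lt hd' w hw1 hw2
  have hrv : Set.range v = v '' {i : Fin n | (i : ℕ) < n} := by
    have huniv : {i : Fin n | (i : ℕ) < n} = Set.univ := by
      ext t
      simp [t.isLt]
    rw [huniv, Set.image_univ]
  have hrw : Set.range w = w '' {i : Fin n | (i : ℕ) < n} := by
    have huniv : {i : Fin n | (i : ℕ) < n} = Set.univ := by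
      ext t
      simp [t.isLt]
    rw [huniv, Set.image_univ]
  have htopv : ⊤ ≤ Submodule.span k (Set.range v) := by
    rw [hrv, hSc' n le_rfl, hc'.2.1]
  have htopw : ⊤ ≤ Submodule.span k (Set.range w) := by
    rw [hrw, hSd' n le_rfl, hd'.2.1]
  have hcards : Fintype.card (Fin n) = Module.finrank k V := by rw [Fintype.card_fin, hV]
  let bv := basisOfTopLeSpanOfCardEqFinrank v htopv hcards
  let bw := basisOfTopLeSpanOfCardEqFinrank w htopw hcards
  have hliv : LinearIndependent k v := by
    have h := bv.linearIndependent
    rwa [coe_basisOfTopLeSpanOfCardEqFinrank] at h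
  have hliw : LinearIndependent k w := by
    have h := bw.linearIndependent
    rwa [coe_basisOfTopLeSpanOfCardEqFinrank] at h
  refine ⟨bv.equiv bw (Equiv.refl _), ?_, ?_⟩
  all_goals
    have hg : ∀ i, (bv.equiv bw (Equiv.refl _)) (v i) = w i := by
      intro i
      conv_lhs =>
        rw [show v i = bv i from
          (congrFun (coe_basisOfTopLeSpanOfCardEqFinrank v htopv hcards) i).symm]
      rw [Module.Basis.equiv_apply, Equiv.refl_apply]
      exact congrFun (coe_basisOfTopLeSpanOfCardEqFinrank w htopw hcards) i
    have himg : ∀ S : Set (Fin n),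
        (⇑((bv.equiv bw (Equiv.refl _) : V ≃ₗ[k] V) : V →ₗ[k] V)) '' (v '' S) = w '' S := by
      intro S
      rw [Set.image_image]
      apply Set.image_congr
      intro i _
      show (bv.equiv bw (Equiv.refl _) : V →ₗ[k] V) (v i) = w i
      rw [LinearEquiv.coe_coe]
      exact hg i
  · intro j hj
    have hcard := card_subtype_le P hP1 hPn hPinj hj
    have hSc := span_image_relPos_eq hc v hliv P hPn hvc hj hcard
    have hSd := span_image_relPos_eq hd w hliw P hPn hwc hj hcard
    rw [← hSc, Submodule.map_span, himg, hSd]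
  · intro i hi
    rw [← hSc' i hi, Submodule.map_span, himg, hSd' i hi]
end

section
/- (Bruhat decomposition of GL_n) Let k be a field and n ≥ 1. For every g ∈ GL_n(k) there exists a unique permutation π ∈ S_n such that g ∈ B a_π B; that is, GL_n(k) is the disjoint union over π ∈ S_n of the double cosets B a_π B. -/
/-!
Uniqueness: if `a_π u = v a_σ` with `u, v ∈ B`, the `(π j, j)` entries read `u j j = v (π j) (σ j)`;
as `u j j ≠ 0` and `v` vanishes below the diagonal, `π j ≤ σ j`. By symmetry `π = σ`.

Existence, by induction on `n`: let `q` be the column of the leading entry of the last row of `g`.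
Splitting off the last row and the column `q` puts `g` in block form `[[A, B], [C, D]]` with an
invertible `1 × 1` corner `D`, and the Schur complement factorization
`[[A, B], [C, D]] = [[1, B D⁻¹], [0, 1]] [[A - B D⁻¹ C, 0], [0, D]] [[1, 0], [D⁻¹ C, 1]]`
reduces the problem to the invertible Schur complement of size `n - 1`. Reindexed back, the outer
factors lie in `B`: the first because the split-off row is the last one, the third because `C`
vanishes left of the leading entry.
-/

/-- The set `B` of invertible upper triangular `n × n` matrices over `k`. -/
def upperTriangularUnits (k : Type*) [Field k] (n : ℕ) : Set (Matrix (Fin n) (Fin n) k) :=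
  {b | IsUnit b.det ∧ ∀ i j : Fin n, j < i → b i j = 0}

/-- The permutation matrix `a_π`, with `(a_π)_{ij} = 1` iff `i = π j`. -/
def permMat (k : Type*) [Field k] {n : ℕ} (π : Equiv.Perm (Fin n)) :
    Matrix (Fin n) (Fin n) k :=
  Matrix.of fun i j => if i = π j then 1 else 0

section Bruhat

open Matrix

variable {k : Type*} [Field k] {n : ℕ}

theorem mem_upperTriangularUnits_iff {b : Matrix (Fin n) (Fin n) k} :
    b ∈ upperTriangularUnits k n ↔ b.IsUpperTriangular ∧ ∀ i, b i i ≠ 0 := by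
  refine and_comm.trans (and_congr_right fun (htri : b.IsUpperTriangular) => ?_)
  simp [det_of_isUpperTriangular htri, isUnit_iff_ne_zero, Finset.prod_ne_zero_iff]

theorem one_mem_upperTriangularUnits : (1 : Matrix (Fin n) (Fin n) k) ∈ upperTriangularUnits k n :=
  ⟨by simp, fun _ _ h => one_apply_ne h.ne'⟩

theorem mul_mem_upperTriangularUnits {a b : Matrix (Fin n) (Fin n) k}
    (ha : a ∈ upperTriangularUnits k n) (hb : b ∈ upperTriangularUnits k n) :
    a * b ∈ upperTriangularUnits k n :=
  ⟨by rw [det_mul]; exact ha.1.mul hb.1,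
    fun _ _ h => BlockTriangular.mul (fun _ _ h => ha.2 _ _ h) (fun _ _ h => hb.2 _ _ h) h⟩

theorem inv_mem_upperTriangularUnits {b : Matrix (Fin n) (Fin n) k}
    (hb : b ∈ upperTriangularUnits k n) : b⁻¹ ∈ upperTriangularUnits k n :=
  have := b.invertibleOfIsUnitDet hb.1
  ⟨isUnit_nonsing_inv_det b hb.1,
    fun _ _ h => blockTriangular_inv_of_blockTriangular (fun _ _ h => hb.2 _ _ h) h⟩

theorem mul_permMat_apply (X : Matrix (Fin n) (Fin n) k) (π : Equiv.Perm (Fin n)) (i j) :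
    (X * permMat k π) i j = X i (π j) := by
  simp [mul_apply, permMat]

theorem permMat_mul_apply (X : Matrix (Fin n) (Fin n) k) (π : Equiv.Perm (Fin n)) (i j) :
    (permMat k π * X) i j = X (π.symm i) j := by
  simp [mul_apply, permMat, ← Equiv.symm_apply_eq]

theorem le_of_permMat_mul_eq_mul_permMat {π σ : Equiv.Perm (Fin n)}
    {u v : Matrix (Fin n) (Fin n) k} (hu : u ∈ upperTriangularUnits k n)
    (hv : v ∈ upperTriangularUnits k n) (h : permMat k π * u = v * permMat k σ) (j : Fin n) :
    π j ≤ σ j := by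
  have hentry := congr_fun₂ h (π j) j
  rw [permMat_mul_apply, mul_permMat_apply, Equiv.symm_apply_apply] at hentry
  by_contra! hlt
  exact (mem_upperTriangularUnits_iff.1 hu).2 j (hentry.trans (hv.2 _ _ hlt))

theorem le_of_mul_permMat_mul_eq {π σ : Equiv.Perm (Fin n)}
    {b b' c c' : Matrix (Fin n) (Fin n) k} (hb : b ∈ upperTriangularUnits k n)
    (hb' : b' ∈ upperTriangularUnits k n) (hc : c ∈ upperTriangularUnits k n)
    (hc' : c' ∈ upperTriangularUnits k n)
    (h : b * permMat k π * b' = c * permMat k σ * c') (j : Fin n) : π j ≤ σ j := by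
  refine le_of_permMat_mul_eq_mul_permMat (mul_mem_upperTriangularUnits hb'
    (inv_mem_upperTriangularUnits hc')) (mul_mem_upperTriangularUnits
    (inv_mem_upperTriangularUnits hb) hc) ?_ j
  calc permMat k π * (b' * c'⁻¹) = b⁻¹ * (b * permMat k π * b') * c'⁻¹ := by
        rw [Matrix.mul_assoc b, nonsing_inv_mul_cancel_left _ _ hb.1, Matrix.mul_assoc]
    _ = b⁻¹ * c * permMat k σ := by
        rw [h, Matrix.mul_assoc, mul_nonsing_inv_cancel_right _ _ hc'.1, Matrix.mul_assoc]

def succAboveSumEquiv (p : Fin (n + 1)) : Fin n ⊕ Unit ≃ Fin (n + 1) :=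
  (Equiv.optionEquivSumPUnit (Fin n)).symm.trans (finSuccEquiv' p).symm

@[simp] theorem succAboveSumEquiv_inl (p : Fin (n + 1)) (m : Fin n) :
    succAboveSumEquiv p (Sum.inl m) = p.succAbove m := by
  simp [succAboveSumEquiv]

@[simp] theorem succAboveSumEquiv_inr (p : Fin (n + 1)) (u : Unit) :
    succAboveSumEquiv p (Sum.inr u) = p := by
  simp [succAboveSumEquiv]

@[simp] theorem succAboveSumEquiv_symm_succAbove (p : Fin (n + 1)) (m : Fin n) :
    (succAboveSumEquiv p).symm (p.succAbove m) = Sum.inl m := by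
  rw [Equiv.symm_apply_eq, succAboveSumEquiv_inl]

@[simp] theorem succAboveSumEquiv_symm_self (p : Fin (n + 1)) :
    (succAboveSumEquiv p).symm p = Sum.inr () := by
  rw [Equiv.symm_apply_eq, succAboveSumEquiv_inr]

theorem submatrix_fromBlocks_mem_upperTriangularUnits {p : Fin (n + 1)}
    {A : Matrix (Fin n) (Fin n) k} {B : Matrix (Fin n) Unit k} {C : Matrix Unit (Fin n) k}
    {D : Matrix Unit Unit k} (hA : A ∈ upperTriangularUnits k n) (hD : D () () ≠ 0)
    (hB : ∀ m, p < p.succAbove m → B m () = 0) (hC : ∀ m, p.succAbove m < p → C () m = 0) :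
    (fromBlocks A B C D).submatrix (succAboveSumEquiv p).symm (succAboveSumEquiv p).symm ∈
      upperTriangularUnits k (n + 1) := by
  rw [mem_upperTriangularUnits_iff] at hA ⊢
  refine ⟨fun i j hji => ?_, fun i => ?_⟩
  · obtain ⟨x, rfl⟩ := (succAboveSumEquiv p).surjective i
    obtain ⟨y, rfl⟩ := (succAboveSumEquiv p).surjective j
    rcases x with m | ⟨⟩ <;> rcases y with m' | ⟨⟩ <;> simp_all [hA.1 _]
  · obtain ⟨x, rfl⟩ := (succAboveSumEquiv p).surjective i
    rcases x with m | ⟨⟩ <;> simp [hA.2, hD]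

def insertPerm (p q : Fin (n + 1)) (σ : Equiv.Perm (Fin n)) : Equiv.Perm (Fin (n + 1)) :=
  (succAboveSumEquiv q).symm.trans ((σ.sumCongr (Equiv.refl Unit)).trans (succAboveSumEquiv p))

theorem permMat_insertPerm (p q : Fin (n + 1)) (σ : Equiv.Perm (Fin n)) :
    permMat k (insertPerm p q σ) =
      (fromBlocks (permMat k σ) 0 0 1).submatrix (succAboveSumEquiv p).symm
        (succAboveSumEquiv q).symm := by
  ext i j
  obtain ⟨x, rfl⟩ := (succAboveSumEquiv p).surjective i
  obtain ⟨y, rfl⟩ := (succAboveSumEquiv q).surjective j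
  rcases x with m | ⟨⟩ <;> rcases y with m' | ⟨⟩ <;> simp [permMat, insertPerm]

theorem fromBlocks_eq_mul_mul_of_schurComplement_eq {l m α : Type*} [Fintype l] [Fintype m]
    [DecidableEq l] [DecidableEq m] [CommRing α] {A b a b' : Matrix l l α} {B : Matrix l m α}
    {C : Matrix m l α} {D : Matrix m m α} [Invertible D] (h : A - B * ⅟D * C = b * a * b') :
    fromBlocks A B C D = fromBlocks b B 0 D * fromBlocks a 0 0 1 * fromBlocks b' 0 (⅟D * C) 1 := by
  rw [fromBlocks_eq_of_invertible₂₂ A B C D, h]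
  simp only [fromBlocks_multiply, Matrix.mul_zero, Matrix.zero_mul, Matrix.mul_one,
    Matrix.one_mul, add_zero, zero_add, Matrix.mul_assoc, invOf_mul_self]

theorem exists_eq_mul_permMat_mul : ∀ {n : ℕ} (g : Matrix (Fin n) (Fin n) k), IsUnit g.det →
    ∃ π : Equiv.Perm (Fin n), ∃ b ∈ upperTriangularUnits k n, ∃ b' ∈ upperTriangularUnits k n,
      g = b * permMat k π * b'
  | 0, g, _ => ⟨1, 1, one_mem_upperTriangularUnits, 1, one_mem_upperTriangularUnits,
      Subsingleton.elim _ _⟩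
  | n + 1, g, hg => by
    obtain ⟨q, hmin, hq⟩ : ∃ q, g.IsLeadingEntry (Fin.last n) q :=
      row_ne_zero_iff_exists_isLeadingEntry.1 fun h =>
        hg.ne_zero (det_eq_zero_of_row_eq_zero _ fun j => congr_fun h j)
    set eRow := succAboveSumEquiv (Fin.last n)
    set eCol := succAboveSumEquiv q
    set G := g.submatrix eRow eCol
    have hD : G.toBlocks₂₂ () () ≠ 0 := by simpa [G, eRow, eCol, toBlocks₂₂] using hq
    let : Invertible G.toBlocks₂₂ := invertibleOfIsUnitDet _ (by simpa [det_unique] using hD)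
    have hS : IsUnit (G.toBlocks₁₁ - G.toBlocks₁₂ * ⅟G.toBlocks₂₂ * G.toBlocks₂₁).det := by
      have hGdet : IsUnit G.det := (isUnit_iff_isUnit_det _).1 <|
        (isUnit_submatrix_equiv _ _).2 ((isUnit_iff_isUnit_det _).2 hg)
      rw [← fromBlocks_toBlocks G, det_fromBlocks₂₂] at hGdet
      exact isUnit_of_mul_isUnit_right hGdet
    obtain ⟨σ, b, hb, b', hb', hfac⟩ := exists_eq_mul_permMat_mul _ hS
    have hG : G = fromBlocks b G.toBlocks₁₂ 0 G.toBlocks₂₂ * fromBlocks (permMat k σ) 0 0 1 *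
        fromBlocks b' 0 (⅟G.toBlocks₂₂ * G.toBlocks₂₁) 1 := by
      conv_lhs => rw [← fromBlocks_toBlocks G]
      exact fromBlocks_eq_mul_mul_of_schurComplement_eq hfac
    refine ⟨insertPerm (Fin.last n) q σ,
      (fromBlocks b G.toBlocks₁₂ 0 G.toBlocks₂₂).submatrix eRow.symm eRow.symm,
      submatrix_fromBlocks_mem_upperTriangularUnits hb hD
        (fun _ hm => ((Fin.le_last _).not_gt hm).elim) (by simp),
      (fromBlocks b' 0 (⅟G.toBlocks₂₂ * G.toBlocks₂₁) 1).submatrix eCol.symm eCol.symm,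
      submatrix_fromBlocks_mem_upperTriangularUnits hb' one_ne_zero (by simp)
        fun m hm => ?_, ?_⟩
    · simp [G, eRow, eCol, toBlocks₂₁, hmin _ hm]
    · rw [permMat_insertPerm, submatrix_mul_equiv, submatrix_mul_equiv, ← hG]
      simp [G, submatrix_submatrix]

end Bruhat

theorem stmt_5_general (k : Type*) [Field k] (n : ℕ)
    (g : Matrix (Fin n) (Fin n) k) (hg : IsUnit g.det) :
    ∃! π : Equiv.Perm (Fin n),
      ∃ b ∈ upperTriangularUnits k n, ∃ b' ∈ upperTriangularUnits k n,
        g = b * permMat k π * b' := by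
  obtain ⟨π, b, hb, b', hb', rfl⟩ := exists_eq_mul_permMat_mul g hg
  refine ⟨π, ⟨b, hb, b', hb', rfl⟩, fun σ ⟨c, hc, c', hc', h⟩ => Equiv.ext fun j => ?_⟩
  exact le_antisymm (le_of_mul_permMat_mul_eq hc hc' hb hb' h.symm j)
    (le_of_mul_permMat_mul_eq hb hb' hc hc' h j)

/-- (Bruhat decomposition of `GL_n`) For every invertible matrix `g ∈ GL_n(k)` there is a
unique permutation `π ∈ S_n` with `g ∈ B a_π B`; that is, `GL_n(k)` is the disjoint union
over `π ∈ S_n` of the double cosets `B a_π B`. -/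
theorem stmt_5 (k : Type*) [Field k] (n : ℕ) (hn : 1 ≤ n)
    (g : Matrix (Fin n) (Fin n) k) (hg : IsUnit g.det) :
    ∃! π : Equiv.Perm (Fin n),
      ∃ b ∈ upperTriangularUnits k n, ∃ b' ∈ upperTriangularUnits k n,
        g = b * permMat k π * b' :=
  stmt_5_general k n g hg
end

section
/- Let V be a finite-dimensional real inner product space, let v_1, …, v_m be nonzero vectors in V, and let W be the subgroup of the linear isometries of V generated by the orthogonal reflections s_{v_1}, …, s_{v_m}. Suppose that W permutes the set of hyperplanes {v_1^⊥, …, v_m^⊥}, i.e. for every g ∈ W and every i there is a j with g(v_i^⊥) = v_j^⊥. Then W is finite, and moreover |W| ≤ (2m)!. -/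
/-!
Normalise the vectors to `uᵢ = vᵢ / ‖vᵢ‖`. An isometry `g` sends `vᵢ^⊥` to `(g vᵢ)^⊥`, so the
hypothesis says `g vᵢ` spans the same line as some `vⱼ`, i.e. `g uᵢ = ± uⱼ`. Hence `W` permutes
the finite set `S = {± uᵢ}` of at most `2m` vectors. This action is faithful: every reflection, and
so every element of `W`, fixes the orthogonal complement of `span {vᵢ}` pointwise, and an element
fixing `S` also fixes the `vᵢ`. So `W` embeds into the permutations of `S`.
-/

open Submodule

instance LinearIsometryEquiv.applyMulAction {R E : Type*} [Semiring R] [SeminormedAddCommGroup E]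
    [Module R E] : MulAction (E ≃ₗᵢ[R] E) E where
  smul g x := g x
  one_smul _ := rfl
  mul_smul _ _ _ := rfl

theorem LinearIsometryEquiv.smul_def {R E : Type*} [Semiring R] [SeminormedAddCommGroup E]
    [Module R E] (g : E ≃ₗᵢ[R] E) (x : E) : g • x = g x :=
  rfl

theorem Subgroup.card_le_factorial_of_mapsTo {G α : Type*} [Group G] [MulAction G α]
    (H : Subgroup G) (S : Finset α) (hmaps : ∀ g ∈ H, ∀ x ∈ S, g • x ∈ S)
    (hfaithful : ∀ g ∈ H, (∀ x ∈ S, g • x = x) → g = 1) :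
    Finite H ∧ Nat.card H ≤ S.card.factorial := by
  let restrict : H → (S ↪ S) := fun g =>
    ⟨fun x => ⟨(g : G) • (x : α), hmaps g g.2 x x.2⟩,
      fun x y hxy => Subtype.ext (smul_left_cancel _ (congrArg Subtype.val hxy))⟩
  have hinj : Function.Injective restrict := by
    intro g₁ g₂ h
    have hfix : ∀ x ∈ S, ((g₁⁻¹ * g₂ : H) : G) • x = x := fun x hx => by
      have : (g₁ : G) • x = (g₂ : G) • x :=
        congrArg Subtype.val (DFunLike.congr_fun h ⟨x, hx⟩)
      rw [Subgroup.coe_mul, mul_smul, ← this, Subgroup.coe_inv, inv_smul_smul]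
    exact inv_mul_eq_one.mp (Subtype.ext (hfaithful _ (g₁⁻¹ * g₂).2 hfix))
  refine ⟨Finite.of_injective restrict hinj, ?_⟩
  calc Nat.card H ≤ Nat.card (S ↪ S) := Nat.card_le_card_of_injective restrict hinj
    _ = S.card.factorial := by
      rw [Nat.card_eq_fintype_card, Fintype.card_embedding_eq, Nat.descFactorial_self,
        Fintype.card_coe]

section InnerProductSpace

variable {V : Type*} [NormedAddCommGroup V] [InnerProductSpace ℝ V]

theorem LinearIsometryEquiv.map_normalize (g : V ≃ₗᵢ[ℝ] V) (x : V) :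
    g (NormedSpace.normalize x) = NormedSpace.normalize (g x) := by
  simp only [NormedSpace.normalize, map_smul, LinearIsometryEquiv.norm_map]

theorem normalize_eq_or_eq_neg_of_span_singleton_eq {x y : V} (h : ℝ ∙ x = ℝ ∙ y) :
    NormedSpace.normalize y = NormedSpace.normalize x ∨
      NormedSpace.normalize y = -NormedSpace.normalize x := by
  obtain ⟨z, rfl⟩ := span_singleton_eq_span_singleton.mp h
  rcases (z.ne_zero : (z : ℝ) ≠ 0).lt_or_gt with hz | hz
  · exact Or.inr (NormedSpace.normalize_smul_of_neg hz x)
  · exact Or.inl (NormedSpace.normalize_smul_of_pos hz x)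

theorem LinearIsometryEquiv.span_singleton_eq_of_map_orthogonal_eq (g : V ≃ₗᵢ[ℝ] V) {x y : V}
    (h : (ℝ ∙ x)ᗮ.map (g.toLinearEquiv : V →ₗ[ℝ] V) = (ℝ ∙ y)ᗮ) : ℝ ∙ g x = ℝ ∙ y := by
  rw [map_orthogonal_equiv, map_span, Set.image_singleton] at h
  simpa only [orthogonal_orthogonal, LinearEquiv.coe_coe,
    LinearIsometryEquiv.coe_toLinearEquiv] using congrArg Submodule.orthogonal h

theorem closure_range_reflection_le_fixingSubgroup [CompleteSpace V] {ι : Type*} (v : ι → V) :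
    Subgroup.closure (Set.range fun i => reflection (ℝ ∙ v i)ᗮ) ≤
      fixingSubgroup (V ≃ₗᵢ[ℝ] V) ((span ℝ (Set.range v))ᗮ : Set V) := by
  rw [Subgroup.closure_le]
  rintro _ ⟨i, rfl⟩
  refine (mem_fixingSubgroup_iff _).mpr fun x hx => reflection_mem_subspace_eq_self ?_
  exact orthogonal_le ((span_singleton_le_iff_mem _ _).mpr (subset_span (Set.mem_range_self i))) hx

theorem LinearIsometryEquiv.eq_one_of_eqOn_of_eqOn_orthogonal (g : V ≃ₗᵢ[ℝ] V) (s : Set V)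
    [(span ℝ s).HasOrthogonalProjection] (hs : ∀ x ∈ s, g x = x)
    (hs_orth : ∀ x ∈ (span ℝ s)ᗮ, g x = x) : g = 1 := by
  let F := LinearMap.eqLocus (g.toLinearEquiv : V →ₗ[ℝ] V) LinearMap.id
  have hF : F = ⊤ := by
    rw [eq_top_iff, ← sup_orthogonal_of_hasOrthogonalProjection (K := span ℝ s)]
    exact sup_le (span_le.mpr hs) hs_orth
  ext x
  exact (hF ▸ mem_top : x ∈ F)

end InnerProductSpace

theorem stmt_8_general (V : Type*) [NormedAddCommGroup V] [InnerProductSpace ℝ V]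
    [FiniteDimensional ℝ V] (m : ℕ) (v : Fin m → V)
    (W : Subgroup (V ≃ₗᵢ[ℝ] V))
    (hW : W = Subgroup.closure (Set.range fun i => Submodule.reflection ((ℝ ∙ v i)ᗮ)))
    (hperm : ∀ g ∈ W, ∀ i : Fin m, ∃ j : Fin m,
      Submodule.map (g.toLinearEquiv : V →ₗ[ℝ] V) ((ℝ ∙ v i)ᗮ) = (ℝ ∙ v j)ᗮ) :
    Finite W ∧ Nat.card W ≤ (2 * m).factorial := by
  classical
  let u i := NormedSpace.normalize (v i)
  let S : Finset V := Finset.univ.biUnion fun i => {u i, -u i}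
  have hmemS : ∀ x, x ∈ S ↔ ∃ i, x = u i ∨ x = -u i := by simp [S]
  have hsigned : ∀ g ∈ W, ∀ i, ∃ j, g (u i) = u j ∨ g (u i) = -u j := by
    intro g hg i
    obtain ⟨j, hj⟩ := hperm g hg i
    refine ⟨j, ?_⟩
    rw [g.map_normalize]
    rcases normalize_eq_or_eq_neg_of_span_singleton_eq (g.span_singleton_eq_of_map_orthogonal_eq hj)
      with h | h
    exacts [Or.inl h.symm, Or.inr (neg_eq_iff_eq_neg.mp h.symm)]
  have hmaps : ∀ g ∈ W, ∀ x ∈ S, g • x ∈ S := by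
    intro g hg x hx
    obtain ⟨i, rfl | rfl⟩ := (hmemS x).mp hx <;> obtain ⟨j, hj | hj⟩ := hsigned g hg i <;>
      simp only [hmemS, LinearIsometryEquiv.smul_def, map_neg, hj, neg_neg] <;> exact ⟨j, by simp⟩
  have hfaithful : ∀ g ∈ W, (∀ x ∈ S, g • x = x) → g = 1 := by
    intro g hg hgS
    refine g.eq_one_of_eqOn_of_eqOn_orthogonal (Set.range v) ?_ fun x hx => ?_
    · rintro _ ⟨i, rfl⟩
      rw [← NormedSpace.norm_smul_normalize (v i), map_smul]
      exact congrArg _ (hgS (u i) ((hmemS _).mpr ⟨i, Or.inl rfl⟩))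
    · have hg_fix := closure_range_reflection_le_fixingSubgroup v (hW ▸ hg)
      exact (mem_fixingSubgroup_iff _).mp hg_fix x hx
  have hcardS : S.card ≤ 2 * m := by
    calc S.card ≤ ∑ i, ({u i, -u i} : Finset V).card := Finset.card_biUnion_le
      _ ≤ ∑ _i : Fin m, 2 := Finset.sum_le_sum fun i _ => Finset.card_le_two
      _ = 2 * m := by simp [mul_comm]
  obtain ⟨hfin, hcard⟩ := W.card_le_factorial_of_mapsTo S hmaps hfaithful
  exact ⟨hfin, hcard.trans (Nat.factorial_le hcardS)⟩

/-- Let `V` be a finite-dimensional real inner product space, `v_1, …, v_m` nonzero vectors,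
and `W` the subgroup of the linear isometries of `V` generated by the orthogonal reflections
`s_{v_1}, …, s_{v_m}` (where `s_v` is the reflection through the hyperplane `v^⊥`).  If `W`
permutes the set of hyperplanes `{v_1^⊥, …, v_m^⊥}`, then `W` is finite with `|W| ≤ (2m)!`. -/
theorem stmt_8 (V : Type*) [NormedAddCommGroup V] [InnerProductSpace ℝ V]
    [FiniteDimensional ℝ V] (m : ℕ) (v : Fin m → V) (hv : ∀ i, v i ≠ 0)
    (W : Subgroup (V ≃ₗᵢ[ℝ] V))
    (hW : W = Subgroup.closure (Set.range fun i => Submodule.reflection ((ℝ ∙ v i)ᗮ)))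
    (hperm : ∀ g ∈ W, ∀ i : Fin m, ∃ j : Fin m,
      Submodule.map (g.toLinearEquiv : V →ₗ[ℝ] V) ((ℝ ∙ v i)ᗮ) = (ℝ ∙ v j)ᗮ) :
    Finite W ∧ Nat.card W ≤ (2 * m).factorial :=
  stmt_8_general V m v W hW hperm
end

section
/- (Coxeter presentation of the symmetric group, type A_n) Let n ≥ 1 and define m_{ij} for 1 ≤ i, j ≤ n by m_{ii} = 1, m_{ij} = 3 if |i − j| = 1, and m_{ij} = 2 if |i − j| ≥ 2. Then the group presented by generators s_1, …, s_n subject to the relations (s_i s_j)^{m_{ij}} = 1 is isomorphic to the symmetric group S_{n+1}, via the isomorphism induced by sending s_i to the adjacent transposition (i, i+1). -/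
/-!
The adjacent transpositions satisfy the Coxeter relations of type `Aₙ` and generate `S_{n+1}`,
so `s_i ↦ (i, i+1)` induces a surjection `W(Aₙ) → S_{n+1}`. It is a bijection because
`|W(Aₙ)| ≤ (n+1)!`: with `H` the subgroup generated by `s_0, …, s_{n-2}` (a quotient of
`W(A_{n-1})`), the union of the right cosets `H (s_{n-1} s_{n-2} ⋯ s_{n-k})`, `0 ≤ k ≤ n`, is
stable under right multiplication by every generator, hence is all of `W(Aₙ)`; so
`[W(Aₙ) : H] ≤ n + 1`.
-/

open CoxeterSystem Equiv Function

namespace CoxeterSystem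

variable {B W : Type*} [Group W] {M : CoxeterMatrix B} (cs : CoxeterSystem M W)

theorem simple_mul_simple_mul_simple_of_eq_three {i j : B} (h : M i j = 3) :
    cs.simple i * cs.simple j * cs.simple i = cs.simple j * cs.simple i * cs.simple j := by
  have := cs.wordProd_braidWord_eq j i
  simpa [braidWord, M.symmetric j i, h, alternatingWord, wordProd, mul_assoc] using this

theorem commute_simple_of_eq_two {i j : B} (h : M i j = 2) :
    Commute (cs.simple i) (cs.simple j) := by
  have := cs.wordProd_braidWord_eq i j
  simpa [braidWord, M.symmetric j i, h, alternatingWord, wordProd, Commute, SemiconjBy] using this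

theorem isLiftable_simple_comp {B' W' : Type*} [Group W'] {M' : CoxeterMatrix B'}
    (cs' : CoxeterSystem M' W') (f : B → B') (hf : ∀ i j, M' (f i) (f j) = M i j) :
    M.IsLiftable (cs'.simple ∘ f) := fun i j => by
  simpa [hf] using cs'.simple_mul_simple_pow (f i) (f j)

end CoxeterSystem

namespace Equiv.Perm

variable {α : Type*} [DecidableEq α]

theorem swap_mul_swap_pow_three [Fintype α] {a b c : α} (hab : a ≠ b) (hac : a ≠ c)
    (hbc : b ≠ c) : (swap a b * swap a c) ^ 3 = 1 := by
  rw [← (isThreeCycle_swap_mul_swap_same hab hac hbc).orderOf, pow_orderOf_eq_one]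

theorem swap_mul_swap_pow_two {a b c d : α} (h : [a, b, c, d].Nodup) :
    (swap a b * swap c d) ^ 2 = 1 := by
  rw [(disjoint_swap_swap h).commute.mul_pow, pow_two, pow_two, swap_mul_self, swap_mul_self,
    mul_one]

end Equiv.Perm

namespace CoxeterMatrix.A

theorem apply (n : ℕ) (i j : Fin n) : CoxeterMatrix.A n i j =
    if i = j then 1 else if (j : ℕ) + 1 = i ∨ (i : ℕ) + 1 = j then 3 else 2 := rfl

theorem apply_castSucc (n : ℕ) (i j : Fin n) :
    CoxeterMatrix.A (n + 1) i.castSucc j.castSucc = CoxeterMatrix.A n i j := by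
  simp [apply, Fin.ext_iff]

/-- The simple reflection `sₓ` of `W(A_{m+1})` for `x ≤ m`, and `1` for `x > m`. -/
noncomputable def s (m x : ℕ) : (CoxeterMatrix.A (m + 1)).Group :=
  if h : x ≤ m then (CoxeterMatrix.A (m + 1)).simple ⟨x, by omega⟩ else 1

variable {m : ℕ}

theorem s_of_le {x : ℕ} (h : x ≤ m) :
    s m x = (CoxeterMatrix.A (m + 1)).toCoxeterSystem.simple ⟨x, by omega⟩ := by
  rw [s, dif_pos h, toCoxeterSystem_simple]

theorem s_mul_self (x : ℕ) : s m x * s m x = 1 := by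
  by_cases h : x ≤ m
  · rw [s_of_le h, simple_mul_simple_self]
  · simp [s, h]

theorem s_mul_s_mul_s {x : ℕ} (h : x + 1 ≤ m) :
    s m x * s m (x + 1) * s m x = s m (x + 1) * s m x * s m (x + 1) := by
  rw [s_of_le (by omega), s_of_le h]
  exact simple_mul_simple_mul_simple_of_eq_three _ (by simp [apply, Fin.ext_iff])

theorem commute_s {x y : ℕ} (h : x + 2 ≤ y) : Commute (s m x) (s m y) := by
  by_cases hy : y ≤ m
  · rw [s_of_le (by omega), s_of_le hy]
    refine commute_simple_of_eq_two _ ?_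
    rw [apply, if_neg (by simp [Fin.ext_iff]; omega), if_neg (by simp; omega)]
  · simp [s, hy]

/-- The coset representative `s_m s_{m-1} ⋯ s_{m-k+1}`. -/
noncomputable def descProd (m : ℕ) : ℕ → (CoxeterMatrix.A (m + 1)).Group
  | 0 => 1
  | k + 1 => descProd m k * s m (m - k)

theorem commute_s_descProd {x k : ℕ} (h : x + k + 1 ≤ m) : Commute (s m x) (descProd m k) := by
  induction k with
  | zero => exact Commute.one_right _
  | succ k ih => exact (ih (by omega)).mul_right (commute_s (by omega))

theorem descProd_mul_s {x k : ℕ} (hx : x ≤ m) (hk : k ≤ m + 1) (h : m + 2 ≤ x + k) :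
    descProd m k * s m x = s m (x - 1) * descProd m k := by
  induction k with
  | zero => omega
  | succ k ih =>
    rcases (show m + 2 ≤ x + k ∨ x + k = m + 1 by omega) with hfar | hadj
    · have hcomm : Commute (s m (m - k)) (s m x) := commute_s (by omega)
      rw [descProd, mul_assoc, hcomm.eq, ← mul_assoc, ih (by omega) hfar, mul_assoc]
    · -- `descProd (j+2) * sₓ = descProd j * sₓ sₓ₋₁ sₓ = descProd j * sₓ₋₁ sₓ sₓ₋₁`, and
      -- `sₓ₋₁` commutes with `descProd j`, whose factors have indices `≥ x + 1`.
      obtain ⟨j, rfl⟩ : ∃ j, k = j + 1 := ⟨k - 1, by omega⟩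
      obtain rfl : x = m - j := by omega
      have hbraid := s_mul_s_mul_s (m := m) (x := m - j - 1) (by omega)
      rw [show m - j - 1 + 1 = m - j by omega] at hbraid
      rw [descProd, descProd, show m - (j + 1) = m - j - 1 by omega, mul_assoc, mul_assoc,
        ← mul_assoc (s m _), ← hbraid, ← mul_assoc, ← mul_assoc,
        ← (commute_s_descProd (by omega)).eq, mul_assoc, mul_assoc, mul_assoc]

variable (m) in
noncomputable def incl : (CoxeterMatrix.A m).Group →* (CoxeterMatrix.A (m + 1)).Group :=
  (CoxeterMatrix.A m).toCoxeterSystem.lift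
    ⟨_, isLiftable_simple_comp (CoxeterMatrix.A (m + 1)).toCoxeterSystem Fin.castSucc
      (apply_castSucc m)⟩

theorem incl_simple (i : Fin m) : incl m ((CoxeterMatrix.A m).simple i) = s m i := by
  rw [incl, ← toCoxeterSystem_simple, lift_apply_simple, s_of_le (by omega)]
  rfl

variable (m) in
theorem incl_mul_descProd_surjective :
    Surjective fun p : (CoxeterMatrix.A m).Group × Fin (m + 2) => incl m p.1 * descProd m p.2 := by
  intro w
  induction w using (CoxeterMatrix.A (m + 1)).toCoxeterSystem.simple_induction_right with
  | one => exact ⟨(1, 0), by simp [descProd]⟩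
  | mul_simple_right w i ih =>
    obtain ⟨⟨g, k, hk⟩, rfl⟩ := ih
    rw [← s_of_le (by omega)]
    dsimp only
    rcases (show i + k < m ∨ i + k = m ∨ i + k = m + 1 ∨ m + 2 ≤ i + k by omega)
      with hlt | hnext | hprev | hgt
    · refine ⟨(g * (CoxeterMatrix.A m).simple ⟨i, by omega⟩, ⟨k, hk⟩), ?_⟩
      rw [map_mul, incl_simple, mul_assoc, mul_assoc,
        (commute_s_descProd (x := i) (k := k) (by omega)).eq]
    · refine ⟨(g, ⟨k + 1, by omega⟩), ?_⟩
      rw [descProd, show m - k = i by omega, mul_assoc]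
    · obtain ⟨j, rfl⟩ : ∃ j, k = j + 1 := ⟨k - 1, by omega⟩
      refine ⟨(g, ⟨j, by omega⟩), ?_⟩
      rw [descProd, show m - j = i by omega, mul_assoc, mul_assoc, s_mul_self, mul_one]
    · refine ⟨(g * (CoxeterMatrix.A m).simple ⟨i - 1, by omega⟩, ⟨k, hk⟩), ?_⟩
      rw [map_mul, incl_simple, mul_assoc, mul_assoc, descProd_mul_s (by omega) (by omega) hgt]

instance : Subsingleton (CoxeterMatrix.A 0).Group :=
  subsingleton_of_forall_eq 1 fun w =>
    (CoxeterMatrix.A 0).toCoxeterSystem.simple_induction (p := (· = 1)) w (fun i => i.elim0) rfl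
      fun _ _ hv hw => by rw [hv, hw, mul_one]

variable (m) in
theorem finite_and_card_le : Finite (CoxeterMatrix.A m).Group ∧
    Nat.card (CoxeterMatrix.A m).Group ≤ (m + 1).factorial := by
  induction m with
  | zero => exact ⟨inferInstance, by simp [Nat.card_unique]⟩
  | succ m ih =>
    obtain ⟨_, hcard⟩ := ih
    have hsurj := incl_mul_descProd_surjective m
    refine ⟨Finite.of_surjective _ hsurj, ?_⟩
    calc Nat.card (CoxeterMatrix.A (m + 1)).Group
        ≤ Nat.card ((CoxeterMatrix.A m).Group × Fin (m + 2)) :=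
          Nat.card_le_card_of_surjective _ hsurj
      _ = Nat.card (CoxeterMatrix.A m).Group * (m + 2) := by simp
      _ ≤ (m + 1).factorial * (m + 2) := Nat.mul_le_mul_right _ hcard
      _ = (m + 2).factorial := by rw [Nat.factorial_succ (m + 1), mul_comm]

variable (m) in
theorem isLiftable_swap :
    (CoxeterMatrix.A m).IsLiftable fun i : Fin m => swap i.castSucc i.succ := by
  intro i j
  dsimp only
  rw [apply]
  rcases eq_or_ne i j with rfl | hij
  · rw [if_pos rfl, pow_one, swap_mul_self]
  rw [if_neg hij]
  split_ifs with hadj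
  · rcases hadj with hji | hij
    · rw [swap_comm j.castSucc, show j.succ = i.castSucc by ext; simp; omega]
      exact Perm.swap_mul_swap_pow_three (by simp [Fin.ext_iff]) (by simp [Fin.ext_iff]; omega)
        (by simp [Fin.ext_iff]; omega)
    · rw [swap_comm i.castSucc, show j.castSucc = i.succ by ext; simp; omega]
      exact Perm.swap_mul_swap_pow_three (by simp [Fin.ext_iff]) (by simp [Fin.ext_iff]; omega)
        (by simp [Fin.ext_iff]; omega)
  · exact Perm.swap_mul_swap_pow_two (by simp [Fin.ext_iff]; omega)

variable (m) in
noncomputable def toPerm : (CoxeterMatrix.A m).Group →* Perm (Fin (m + 1)) :=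
  (CoxeterMatrix.A m).toCoxeterSystem.lift ⟨_, isLiftable_swap m⟩

theorem toPerm_simple (i : Fin m) :
    toPerm m ((CoxeterMatrix.A m).simple i) = swap i.castSucc i.succ := by
  rw [toPerm, ← toCoxeterSystem_simple, lift_apply_simple]

variable (m) in
theorem toPerm_surjective : Surjective (toPerm m) := by
  rw [← MonoidHom.mrange_eq_top, eq_top_iff, ← Perm.mclosure_swap_castSucc_succ,
    Submonoid.closure_le]
  rintro _ ⟨i, rfl⟩
  exact ⟨_, toPerm_simple i⟩

variable (m) in
theorem toPerm_bijective : Bijective (toPerm m) := by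
  obtain ⟨_, hcard⟩ := finite_and_card_le m
  refine (Nat.bijective_iff_surjective_and_card _).2
    ⟨toPerm_surjective m, le_antisymm ?_ ?_⟩
  · simpa [Nat.card_eq_fintype_card, Fintype.card_perm] using hcard
  · exact Nat.card_le_card_of_surjective _ (toPerm_surjective m)

end CoxeterMatrix.A

theorem stmt_11_general (n : ℕ) (M : CoxeterMatrix (Fin n))
    (hM : ∀ i j : Fin n, M i j =
      if i = j then 1 else if (i : ℕ) + 1 = (j : ℕ) ∨ (j : ℕ) + 1 = (i : ℕ) then 3 else 2) :
    ∃ φ : M.Group ≃* Equiv.Perm (Fin (n + 1)),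
      ∀ i : Fin n, φ (M.simple i) = Equiv.swap i.castSucc i.succ := by
  obtain rfl : M = CoxeterMatrix.A n := by
    ext i j
    simp only [hM, CoxeterMatrix.A.apply, or_comm]
  exact ⟨MulEquiv.ofBijective _ (CoxeterMatrix.A.toPerm_bijective n),
    CoxeterMatrix.A.toPerm_simple⟩

/-- (Coxeter presentation of the symmetric group, type `Aₙ`) Let `n ≥ 1` and let `M` be the
Coxeter matrix with `m_{ii} = 1`, `m_{ij} = 3` if `|i − j| = 1` and `m_{ij} = 2` if
`|i − j| ≥ 2`.  Then the group presented by generators `s_1, …, s_n` and relations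
`(s_i s_j)^{m_{ij}} = 1` is isomorphic to the symmetric group `S_{n+1}` via the
isomorphism induced by sending `s_i` to the adjacent transposition `(i, i+1)`. -/
theorem stmt_11 (n : ℕ) (hn : 1 ≤ n) (M : CoxeterMatrix (Fin n))
    (hM : ∀ i j : Fin n, M i j =
      if i = j then 1 else if (i : ℕ) + 1 = (j : ℕ) ∨ (j : ℕ) + 1 = (i : ℕ) then 3 else 2) :
    ∃ φ : M.Group ≃* Equiv.Perm (Fin (n + 1)),
      ∀ i : Fin n, φ (M.simple i) = Equiv.swap i.castSucc i.succ :=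
  stmt_11_general n M hM
end

section
/- (Presentation of the infinite dihedral reflection group) Let s_0, s_1 : ℝ → ℝ be the bijections s_0(x) = −x and s_1(x) = 2 − x, regarded as elements of the permutation group of ℝ. Let D be the group presented by two generators a, b subject only to the relations a^2 = 1 and b^2 = 1. Then the group homomorphism D → Perm(ℝ) induced by a ↦ s_0 and b ↦ s_1 is injective; its image is the subgroup generated by s_0 and s_1. -/
/-- The affine reflection of `ℝ` in the integer `n`: the bijection `x ↦ 2n − x`,
regarded as an element of the permutation group of `ℝ`. -/
def affRefl (n : ℤ) : Equiv.Perm ℝ :=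
  Function.Involutive.toPerm (fun x => 2 * (n : ℝ) - x)
    (fun x => by show 2 * (n : ℝ) - (2 * (n : ℝ) - x) = x; ring)

/-- Relations of the infinite dihedral group: `a² = 1` and `b² = 1` in the free group on
two generators. -/
def infDihedralRels : Set (FreeGroup (Fin 2)) :=
  {(FreeGroup.of 0) ^ 2, (FreeGroup.of 1) ^ 2}

/-! Conjugation by an involution `a` inverts `t = a * b` when `b` is also an involution, so every
element of a group generated by `a` and `b` is `t ^ n` or `t ^ n * a`. Under `a ↦ s₀`, `b ↦ s₁`,
`t ^ n` goes to the translation `x ↦ x - 2n` and `t ^ n * a` to the reflection in `-n`; neither is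
the identity unless it is `t ^ 0`, so the kernel is trivial. -/

section Involutions

variable {G : Type*} [Group G] {a b : G}

lemma mul_zpow_mul_eq_zpow_neg_mul (ha : a * a = 1) (hb : b * b = 1) (n : ℤ) :
    a * (a * b) ^ n = (a * b) ^ (-n) * a := by
  have hconj : SemiconjBy a (a * b) (a * b)⁻¹ := by
    rw [SemiconjBy, mul_inv_rev, inv_eq_of_mul_eq_one_right ha, inv_eq_of_mul_eq_one_right hb,
      ← mul_assoc, ha, one_mul, mul_assoc, ha, mul_one]
  rw [zpow_neg, ← inv_zpow]
  exact hconj.zpow_right n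

lemma exists_zpow_or_zpow_mul_of_mem_closure_pair (ha : a * a = 1) (hb : b * b = 1) {g : G}
    (hg : g ∈ Subgroup.closure {a, b}) : ∃ n : ℤ, g = (a * b) ^ n ∨ g = (a * b) ^ n * a := by
  have hcomm := mul_zpow_mul_eq_zpow_neg_mul ha hb
  induction hg using Subgroup.closure_induction with
  | mem x hx =>
    rcases hx with rfl | rfl
    · exact ⟨0, Or.inr (by rw [zpow_zero, one_mul])⟩
    · refine ⟨-1, Or.inr ?_⟩
      rw [zpow_neg_one, mul_inv_rev, inv_mul_cancel_right, inv_eq_of_mul_eq_one_right hb]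
  | one => exact ⟨0, Or.inl (zpow_zero _).symm⟩
  | mul x y _ _ hx hy =>
    obtain ⟨n, rfl | rfl⟩ := hx <;> obtain ⟨m, rfl | rfl⟩ := hy
    · exact ⟨n + m, Or.inl (zpow_add _ _ _).symm⟩
    · exact ⟨n + m, Or.inr (by rw [zpow_add, mul_assoc])⟩
    · exact ⟨n - m, Or.inr (by rw [mul_assoc, hcomm, ← mul_assoc, ← zpow_add, sub_eq_add_neg])⟩
    · refine ⟨n - m, Or.inl ?_⟩
      rw [mul_assoc, ← mul_assoc a, hcomm, mul_assoc, ha, mul_one, ← zpow_add, sub_eq_add_neg]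
  | inv x _ hx =>
    obtain ⟨n, rfl | rfl⟩ := hx
    · exact ⟨-n, Or.inl (zpow_neg _ _).symm⟩
    · refine ⟨n, Or.inr ?_⟩
      rw [mul_inv_rev, inv_eq_of_mul_eq_one_right ha, ← zpow_neg, hcomm, neg_neg]

end Involutions

@[simp]
lemma affRefl_apply (n : ℤ) (x : ℝ) : affRefl n x = 2 * n - x := rfl

lemma affRefl_mul_self (n : ℤ) : affRefl n * affRefl n = 1 := by
  ext x
  simp

lemma affRefl_ne_one (n : ℤ) : affRefl n ≠ 1 := by
  intro h
  have := congrArg (· (n + 1 : ℝ)) h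
  simp only [affRefl_apply, Equiv.Perm.one_apply] at this
  linarith

lemma affRefl_mul_affRefl (m n : ℤ) :
    affRefl m * affRefl n = Equiv.addRight (2 * (m - n) : ℝ) := by
  ext x
  simp only [Equiv.Perm.mul_apply, affRefl_apply, Equiv.coe_addRight]
  ring

lemma affRefl_zero_mul_one_zpow (n : ℤ) :
    (affRefl 0 * affRefl 1) ^ n = Equiv.addRight (-2 * n : ℝ) := by
  rw [affRefl_mul_affRefl, Equiv.zsmul_addRight]
  ext x
  simp only [Equiv.coe_addRight, zsmul_eq_mul]
  push_cast
  ring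

lemma affRefl_zero_mul_one_zpow_mul_affRefl_zero (n : ℤ) :
    (affRefl 0 * affRefl 1) ^ n * affRefl 0 = affRefl (-n) := by
  ext x
  rw [affRefl_zero_mul_one_zpow, Equiv.Perm.mul_apply, Equiv.coe_addRight]
  simp only [affRefl_apply]
  push_cast
  ring

namespace PresentedGroup

lemma of_mul_self_infDihedralRels (i : Fin 2) :
    (of i : PresentedGroup infDihedralRels) * of i = 1 := by
  rw [← sq, of, ← map_pow]
  apply one_of_mem
  fin_cases i
  · exact Or.inl rfl
  · exact Or.inr rfl

lemma closure_of_zero_of_one (rels : Set (FreeGroup (Fin 2))) :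
    Subgroup.closure {of 0, of 1} = (⊤ : Subgroup (PresentedGroup rels)) := by
  rw [← closure_range_of]
  congr 1
  ext g
  simp [Fin.exists_fin_two, eq_comm]

end PresentedGroup

noncomputable def infDihedralRep : PresentedGroup infDihedralRels →* Equiv.Perm ℝ :=
  PresentedGroup.toGroup (f := ![affRefl 0, affRefl 1]) <| by
    rintro r (rfl | rfl) <;> simp [sq, affRefl_mul_self]

lemma infDihedralRep_of_zero : infDihedralRep (PresentedGroup.of 0) = affRefl 0 :=
  PresentedGroup.toGroup.of _

lemma infDihedralRep_of_one : infDihedralRep (PresentedGroup.of 1) = affRefl 1 :=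
  PresentedGroup.toGroup.of _

lemma infDihedralRep_range :
    infDihedralRep.range = Subgroup.closure {affRefl 0, affRefl 1} := by
  rw [MonoidHom.range_eq_map, ← PresentedGroup.closure_range_of, MonoidHom.map_closure,
    ← Set.range_comp, ← Matrix.range_cons_cons_empty _ _ ![]]
  rfl

lemma infDihedralRep_injective : Function.Injective infDihedralRep := by
  rw [injective_iff_map_eq_one]
  intro g hg
  have hgen : g ∈ Subgroup.closure {PresentedGroup.of 0, PresentedGroup.of 1} := by
    rw [PresentedGroup.closure_of_zero_of_one]; trivial
  obtain ⟨n, rfl | rfl⟩ := exists_zpow_or_zpow_mul_of_mem_closure_pair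
    (PresentedGroup.of_mul_self_infDihedralRels 0)
    (PresentedGroup.of_mul_self_infDihedralRels 1) hgen
  · rw [map_zpow, map_mul, infDihedralRep_of_zero, infDihedralRep_of_one,
      affRefl_zero_mul_one_zpow] at hg
    have hn : (-2 * n : ℝ) = 0 := by simpa using congrArg (· 0) hg
    rw [show n = 0 by simpa using hn, zpow_zero]
  · rw [map_mul, map_zpow, map_mul, infDihedralRep_of_zero, infDihedralRep_of_one,
      affRefl_zero_mul_one_zpow_mul_affRefl_zero] at hg
    exact absurd hg (affRefl_ne_one _)

/-- (Presentation of the infinite dihedral reflection group) Let `s_0(x) = −x` and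
`s_1(x) = 2 − x` in `Perm ℝ`, and let `D = ⟨a, b ∣ a² = b² = 1⟩`.  The homomorphism
`D → Perm ℝ` induced by `a ↦ s_0`, `b ↦ s_1` is injective, and its image is the subgroup
generated by `s_0` and `s_1`. -/
theorem stmt_14 :
    ∃ φ : PresentedGroup infDihedralRels →* Equiv.Perm ℝ,
      φ (PresentedGroup.of 0) = affRefl 0 ∧
      φ (PresentedGroup.of 1) = affRefl 1 ∧
      Function.Injective φ ∧
      φ.range = Subgroup.closure {affRefl 0, affRefl 1} :=
  ⟨infDihedralRep, infDihedralRep_of_zero, infDihedralRep_of_one, infDihedralRep_injective,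
    infDihedralRep_range⟩
end
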